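/- arXiv:2008.03117 — 2 statements merged into one kernel-verified Lean document; each statement's English description precedes it below -/
import Mathlib

section
/- Let π be a set of primes and H an N^π-Dnormal subgroup of a finite group G. Then O^π(H) is normal in G and the image of H in the quotient G/O^π(H) is contained in O_π(G/O^π(H)), the largest normal π-subgroup of G/O^π(H). -/
/-! If `H` is `N^π`-Dnormal, then in `X = G/O^π(H)` the image `A` of `H` is a π-group (it is
`H/O^π(H)`) normalized by a normal subgroup `N` of π-index (the image of `O^π(G)`; if `H ⊴ G`,
directly `A ⊴ X`). Such an `A` lies in `O_π(X)`. Modulo `O_π(X)` we may assume `O_π(X) = 1`.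
Then `A ∩ N` is a normal π-subgroup of `N`, hence lies in `O_π(N) ≤ O_π(X) = 1`, so `[A, N] = 1`
and `A ≤ C = C_X(N)`. Since `C ∩ N ≤ Z(C)`, the index `[C : Z(C)]` is a π-number, so by Schur's
theorem `C'` is a π-group; being characteristic in `C ⊴ X` it is trivial. Thus `C` is abelian,
and `A ≤ O_π(C) ≤ O_π(X) = 1`. -/

/-- A (finite) group is a `π`-group if every prime dividing its order lies in `π`. -/
def IsPiGroup (π : Set ℕ) (G : Type*) [Group G] : Prop :=
  ∀ p : ℕ, p.Prime → p ∣ Nat.card G → p ∈ π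

/-- `O^π(G)`: the smallest normal subgroup of `G` whose quotient is a `π`-group
(recall that `N.index = Nat.card (G ⧸ N)`). -/
def piResidual (π : Set ℕ) (G : Type*) [Group G] : Subgroup G :=
  ⨅ N ∈ {N : Subgroup G | N.Normal ∧ ∀ p : ℕ, p.Prime → p ∣ N.index → p ∈ π}, N

/-- `O_π(G)`: the largest normal `π`-subgroup of `G`. -/
def piCore (π : Set ℕ) (G : Type*) [Group G] : Subgroup G :=
  ⨆ N ∈ {N : Subgroup G | N.Normal ∧ IsPiGroup π N}, N

/-- `O^π(H)` for a subgroup `H ≤ G`, regarded as a subgroup of `G`. -/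
def piResidualIn (π : Set ℕ) {G : Type*} [Group G] (H : Subgroup G) : Subgroup G :=
  (piResidual π H).map H.subtype

/-- `H` is `N^π`-Dnormal in `G`: if `|π| ≤ 1` this means `H` is normal in `G`; if
`|π| ≥ 2` it means that `O^π(H)` is normal in `G` and `O^π(G)` normalizes `H`. -/
def IsDnormal (π : Set ℕ) {G : Type*} [Group G] (H : Subgroup G) : Prop :=
  (π.Subsingleton ∧ H.Normal) ∨
  (¬ π.Subsingleton ∧ (piResidualIn π H).Normal ∧ piResidual π G ≤ Subgroup.normalizer (H : Set G))

/-- `S` is `N^π`-Dsubnormal in `G`: there is a chain `S = S₀ ≤ S₁ ≤ ⋯ ≤ Sₙ = G`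
with each `Sᵢ` being `N^π`-Dnormal in `Sᵢ₊₁`. -/
def IsDsubnormal (π : Set ℕ) {G : Type*} [Group G] (S : Subgroup G) : Prop :=
  ∃ (n : ℕ) (c : Fin (n + 1) → Subgroup G), c 0 = S ∧ c (Fin.last n) = ⊤ ∧
    ∀ i : Fin n, c i.castSucc ≤ c i.succ ∧
      IsDnormal π ((c i.castSucc).subgroupOf (c i.succ))

/-- `H` is subnormal in `G`. -/
def IsSubnormal' {G : Type*} [Group G] (H : Subgroup G) : Prop :=
  ∃ (n : ℕ) (c : Fin (n + 1) → Subgroup G), c 0 = H ∧ c (Fin.last n) = ⊤ ∧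
    ∀ i : Fin n, c i.castSucc ≤ c i.succ ∧
      ((c i.castSucc).subgroupOf (c i.succ)).Normal

/-- The class `N^π`: groups that are the (internal) direct product of a `π`-group and a
nilpotent `π'`-group. -/
def IsNPiGroup (π : Set ℕ) (G : Type*) [Group G] : Prop :=
  ∃ H K : Subgroup G, H.Normal ∧ K.Normal ∧ H ⊓ K = ⊥ ∧ H ⊔ K = ⊤ ∧
    IsPiGroup π H ∧ IsPiGroup πᶜ K ∧ Group.IsNilpotent K

/-- The `N^π`-residual `G^{N^π}`: the smallest normal subgroup of `G` whose quotient
belongs to the class `N^π`. -/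
def nPiResidual (π : Set ℕ) (G : Type*) [Group G] : Subgroup G :=
  ⨅ N ∈ {N : Subgroup G | ∃ h : N.Normal, letI := h; IsNPiGroup π (G ⧸ N)}, N

/-- `G` is `π'`-soluble: it has a normal series each of whose factors is either a
`π`-group or a `p`-group for some prime `p ∉ π`. -/
def IsPiPrimeSoluble (π : Set ℕ) (G : Type*) [Group G] : Prop :=
  ∃ (n : ℕ) (c : Fin (n + 1) → Subgroup G), c 0 = ⊥ ∧ c (Fin.last n) = ⊤ ∧
    ∀ i : Fin n, c i.castSucc ≤ c i.succ ∧
      ((c i.castSucc).subgroupOf (c i.succ)).Normal ∧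
      ((∀ p : ℕ, p.Prime → p ∣ ((c i.castSucc).subgroupOf (c i.succ)).index → p ∈ π) ∨
        ∃ p : ℕ, p.Prime ∧ p ∉ π ∧
          ∃ k : ℕ, ((c i.castSucc).subgroupOf (c i.succ)).index = p ^ k)

/-- An `N^π`-Fitting set of `G`. -/
def IsNPiFittingSet (π : Set ℕ) {G : Type*} [Group G] (F : Set (Subgroup G)) : Prop :=
  F.Nonempty ∧
  (∀ S ∈ F, ∀ T : Subgroup G, T ≤ S → IsDsubnormal π (T.subgroupOf S) → T ∈ F) ∧
  (∀ S ∈ F, ∀ T ∈ F, IsDnormal π (S.subgroupOf (S ⊔ T)) →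
    IsDnormal π (T.subgroupOf (S ⊔ T)) → S ⊔ T ∈ F) ∧
  (∀ S ∈ F, ∀ x : G, S.map (MulAut.conj x).toMonoidHom ∈ F)

/-- The `F`-radical `H_F` of a subgroup `H` of `G`: the join of all subgroups of `H`
belonging to `F` that are normal in `H`. -/
def fittingRadical {G : Type*} [Group G] (F : Set (Subgroup G)) (H : Subgroup G) : Subgroup G :=
  ⨆ S ∈ {S : Subgroup G | S ∈ F ∧ S ≤ H ∧ (S.subgroupOf H).Normal}, S

/-- `M` is an `F`-maximal subgroup of `K`. -/
def IsFMaximalIn {G : Type*} [Group G] (F : Set (Subgroup G)) (M K : Subgroup G) : Prop :=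
  M ∈ F ∧ M ≤ K ∧ ∀ S ∈ F, S ≤ K → M ≤ S → S = M

/-- `V` is an `F`-injector of `G`. -/
def IsInjector {G : Type*} [Group G] (F : Set (Subgroup G)) (V : Subgroup G) : Prop :=
  ∀ K : Subgroup G, IsSubnormal' K → IsFMaximalIn F (V ⊓ K) K

/-- `V` is an `F`-injector of the subgroup `N` of `G`. -/
def IsInjectorIn {G : Type*} [Group G] (F : Set (Subgroup G)) (V N : Subgroup G) : Prop :=
  V ≤ N ∧ ∀ K : Subgroup G, K ≤ N → IsSubnormal' (K.subgroupOf N) → IsFMaximalIn F (V ⊓ K) K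

/-- `M` is an `N^π`-maximal subgroup of `X`. -/
def IsNPiMaximal (π : Set ℕ) {X : Type*} [Group X] (M : Subgroup X) : Prop :=
  IsNPiGroup π M ∧ ∀ M' : Subgroup X, IsNPiGroup π M' → M ≤ M' → M' = M

/-- `U` is an `N^π`-projector of `G`: `UK/K` is `N^π`-maximal in `G/K` for every
normal subgroup `K` of `G`. -/
def IsNPiProjector (π : Set ℕ) {G : Type*} [Group G] (U : Subgroup G) : Prop :=
  ∀ K : Subgroup G, ∀ hK : K.Normal,
    letI := hK
    IsNPiMaximal π ((U ⊔ K).map (QuotientGroup.mk' K))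

/-- An `N^π`-Fitting class of (finite) groups: a non-empty isomorphism-closed class
closed under `N^π`-Dnormal subgroups and under joins of pairs of `N^π`-Dnormal
subgroups. -/
def IsNPiFittingClass (π : Set ℕ) (F : (H : Type) → [_inst : Group H] → Prop) : Prop :=
  (∃ (H : Type) (g : Group H) (_ : Finite H), F H (_inst := g)) ∧
  (∀ (H K : Type) [Group H] [Group K] [Finite H] [Finite K],
    F H → Nonempty (H ≃* K) → F K) ∧
  (∀ (H : Type) [Group H] [Finite H] (N : Subgroup H),
    F H → IsDnormal π N → F ↥N) ∧
  (∀ (H : Type) [Group H] [Finite H] (M N : Subgroup H),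
    F ↥M → F ↥N → IsDnormal π M → IsDnormal π N → M ⊔ N = ⊤ → F H)


open Subgroup

def IsPiNumber (π : Set ℕ) (n : ℕ) : Prop :=
  ∀ p : ℕ, p.Prime → p ∣ n → p ∈ π

namespace IsPiNumber

variable {π : Set ℕ} {m n : ℕ}

theorem one : IsPiNumber π 1 := fun _ hp hd => absurd (Nat.dvd_one.1 hd) hp.ne_one

theorem of_dvd (hn : IsPiNumber π n) (h : m ∣ n) : IsPiNumber π m :=
  fun p hp hd => hn p hp (hd.trans h)

theorem mul (hm : IsPiNumber π m) (hn : IsPiNumber π n) : IsPiNumber π (m * n) :=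
  fun p hp hd => (hp.dvd_mul.1 hd).elim (hm p hp) (hn p hp)

theorem pow (hn : IsPiNumber π n) (k : ℕ) : IsPiNumber π (n ^ k) :=
  fun p hp hd => hn p hp (hp.dvd_of_dvd_pow hd)

end IsPiNumber

section PiGroups

variable {π : Set ℕ} {G G' : Type*} [Group G] [Group G']

theorem isPiGroup_iff : IsPiGroup π G ↔ IsPiNumber π (Nat.card G) := Iff.rfl

theorem IsPiGroup.map {A : Subgroup G} (hA : IsPiGroup π A) (f : G →* G') :
    IsPiGroup π (A.map f) :=
  IsPiNumber.of_dvd hA (card_map_dvd A f)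

theorem IsPiGroup.subgroupOf {A : Subgroup G} (hA : IsPiGroup π A) (K : Subgroup G) :
    IsPiGroup π (A.subgroupOf K) :=
  IsPiNumber.of_dvd hA (card_comap_dvd_of_injective A K.subtype K.subtype_injective)

theorem IsPiGroup.sup {A B : Subgroup G} [B.Normal] (hA : IsPiGroup π A)
    (hB : IsPiGroup π B) : IsPiGroup π ↥(A ⊔ B) := by
  have hcard : Nat.card B * B.relIndex A = Nat.card ↥(A ⊔ B) := by
    rw [← relIndex_sup_right, ← relIndex_bot_left,
      relIndex_mul_relIndex _ _ _ bot_le le_sup_right, relIndex_bot_left]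
  rw [isPiGroup_iff, ← hcard]
  exact IsPiNumber.mul hB (IsPiNumber.of_dvd hA (relIndex_dvd_card B A))

end PiGroups

section Residual

variable {π : Set ℕ} {G : Type*} [Group G]

theorem isPiNumber_index_inf {A B : Subgroup G} [B.Normal] (hA : IsPiNumber π A.index)
    (hB : IsPiNumber π B.index) : IsPiNumber π (A ⊓ B).index := by
  rw [← relIndex_mul_index inf_le_left, inf_relIndex_left]
  exact IsPiNumber.mul (hB.of_dvd (relIndex_dvd_index_of_normal B A)) hA

theorem piResidual_mem [Finite G] :
    piResidual π G ∈ {N : Subgroup G | N.Normal ∧ IsPiNumber π N.index} := by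
  refine InfClosed.biInf_mem ?_ (Set.toFinite _) ⟨inferInstance, ?_⟩ fun N hN => hN
  · rintro A ⟨hA, hπA⟩ B ⟨hB, hπB⟩
    exact ⟨inferInstance, isPiNumber_index_inf hπA hπB⟩
  · rw [index_top]
    exact IsPiNumber.one

theorem piResidual_normal [Finite G] : (piResidual π G).Normal := piResidual_mem.1

theorem isPiNumber_index_piResidual [Finite G] : IsPiNumber π (piResidual π G).index :=
  piResidual_mem.2

instance piResidual_characteristic : (piResidual π G).Characteristic :=
  characteristic_iff_map_le.2 fun ϕ => le_iInf₂ fun N ⟨hN, hπN⟩ =>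
    map_le_iff_le_comap.2 <| iInf₂_le (N.comap ϕ.toMonoidHom)
      ⟨hN.comap _, by rwa [index_comap_of_surjective N (f := ϕ.toMonoidHom) ϕ.surjective]⟩

instance piResidualIn_normal {H : Subgroup G} [H.Normal] : (piResidualIn π H).Normal :=
  ConjAct.normal_of_characteristic_of_normal

end Residual

section Core

variable {π : Set ℕ} {G : Type*} [Group G]

theorem le_piCore {N : Subgroup G} (hN : N.Normal) (hπN : IsPiGroup π N) : N ≤ piCore π G :=
  le_iSup₂_of_le N ⟨hN, hπN⟩ le_rfl

theorem piCore_mem [Finite G] : piCore π G ∈ {N : Subgroup G | N.Normal ∧ IsPiGroup π N} := by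
  refine SupClosed.biSup_mem ?_ (Set.toFinite _) ⟨inferInstance, ?_⟩ fun N hN => hN
  · rintro A ⟨hA, hπA⟩ B ⟨hB, hπB⟩
    exact ⟨inferInstance, hπA.sup hπB⟩
  · rw [isPiGroup_iff, card_bot]
    exact IsPiNumber.one

theorem piCore_normal [Finite G] : (piCore π G).Normal := piCore_mem.1

theorem isPiGroup_piCore [Finite G] : IsPiGroup π (piCore π G) := piCore_mem.2

instance piCore_characteristic : (piCore π G).Characteristic :=
  characteristic_iff_map_le.2 fun ϕ => map_le_iff_le_comap.2 <| iSup₂_le fun _ ⟨hN, hπN⟩ =>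
    map_le_iff_le_comap.1 <| le_piCore (hN.map _ ϕ.surjective) (hπN.map _)

theorem map_subtype_le_piCore [Finite G] {K : Subgroup G} [K.Normal] {S : Subgroup K}
    (hS : S.Normal) (hπS : IsPiGroup π S) : S.map K.subtype ≤ piCore π G :=
  have := piCore_normal (π := π) (G := K)
  (map_mono (le_piCore hS hπS)).trans
    (le_piCore inferInstance (isPiGroup_piCore.map K.subtype))

theorem card_comap_mk' (N : Subgroup G) [N.Normal] (Q : Subgroup (G ⧸ N)) :
    Nat.card (Q.comap (QuotientGroup.mk' N)) = Nat.card N * Nat.card Q := by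
  have hN : N ≤ Q.comap (QuotientGroup.mk' N) := by
    simpa only [QuotientGroup.ker_mk'] using MonoidHom.ker_le_comap (QuotientGroup.mk' N) Q
  have hQ : N.relIndex (Q.comap (QuotientGroup.mk' N)) = Nat.card Q := by
    simpa only [QuotientGroup.ker_mk',
      map_comap_eq_self_of_surjective (QuotientGroup.mk'_surjective N)]
      using relIndex_ker (Q.comap (QuotientGroup.mk' N)) (QuotientGroup.mk' N)
  rw [← hQ, ← relIndex_bot_left N, relIndex_mul_relIndex _ _ _ bot_le hN, relIndex_bot_left]

theorem piCore_quotient_piCore [Finite G] : piCore π (G ⧸ piCore π G) = ⊥ := by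
  have := piCore_normal (π := π) (G := G)
  have hle : (piCore π (G ⧸ piCore π G)).comap (QuotientGroup.mk' _) ≤ piCore π G :=
    le_piCore (piCore_normal.comap _) <| by
      rw [isPiGroup_iff, card_comap_mk']
      exact IsPiNumber.mul isPiGroup_piCore isPiGroup_piCore
  rw [← map_comap_eq_self_of_surjective (QuotientGroup.mk'_surjective _) (piCore π _),
    Subgroup.map_eq_bot_iff, QuotientGroup.ker_mk']
  exact hle

end Core

section Normalized

variable {π : Set ℕ} {X : Type*} [Group X]

theorem le_centralizer_of_inf_eq_bot {A N : Subgroup X} [N.Normal]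
    (hNA : N ≤ normalizer (A : Set X)) (hAN : A ⊓ N = ⊥) : A ≤ centralizer (N : Set X) := by
  rw [← commutator_eq_bot_iff_le_centralizer, eq_bot_iff, ← hAN, commutator_le]
  intro a ha n hn
  refine ⟨?_, ?_⟩
  · rw [commutatorElement_def, mul_assoc, mul_assoc, ← mul_assoc n]
    exact A.mul_mem ha ((mem_normalizer_iff.1 (hNA hn) a⁻¹).1 (A.inv_mem ha))
  · exact N.mul_mem (Normal.conj_mem ‹_› n hn a) (N.inv_mem hn)

variable [Finite X] (hcore : piCore π X = ⊥) {A N : Subgroup X} [N.Normal]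
include hcore

theorem inf_eq_bot_of_piCore_eq_bot (hNA : N ≤ normalizer (A : Set X)) (hA : IsPiGroup π A) :
    A ⊓ N = ⊥ := by
  rw [← subgroupOf_map_subtype, ← le_bot_iff, ← hcore]
  exact map_subtype_le_piCore (normal_subgroupOf_of_le_normalizer hNA) (hA.subgroupOf N)

theorem isMulCommutative_centralizer_of_piCore_eq_bot (hN : IsPiNumber π N.index) :
    IsMulCommutative (centralizer (N : Set X)) := by
  set C := centralizer (N : Set X)
  have hNZ : N.subgroupOf C ≤ center C := fun x hx =>
    mem_center_iff.2 fun y => Subtype.ext (mem_centralizer_iff.1 y.2 x hx).symm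
  have hZ : IsPiNumber π (center C).index :=
    hN.of_dvd ((index_dvd_of_le hNZ).trans (relIndex_dvd_index_of_normal N C))
  have hπ : IsPiGroup π (commutator C) :=
    (hZ.pow _).of_dvd (card_commutator_dvd_index_center_pow C)
  have hcomm : commutator C = ⊥ :=
    (map_eq_bot_iff_of_injective _ C.subtype_injective).1
      (le_bot_iff.1 (hcore ▸ map_subtype_le_piCore inferInstance hπ))
  rw [commutator_eq_bot_iff_center_eq_top] at hcomm
  exact IsMulCommutative.of_comm fun a b => mem_center_iff.1 (hcomm ▸ mem_top b) a

theorem eq_bot_of_le_normalizer_of_piCore_eq_bot (hN : IsPiNumber π N.index)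
    (hNA : N ≤ normalizer (A : Set X)) (hA : IsPiGroup π A) : A = ⊥ := by
  have hAC : A ≤ centralizer (N : Set X) :=
    le_centralizer_of_inf_eq_bot hNA (inf_eq_bot_of_piCore_eq_bot hcore hNA hA)
  have := isMulCommutative_centralizer_of_piCore_eq_bot hcore hN
  rw [← map_subgroupOf_eq_of_le hAC, ← le_bot_iff, ← hcore]
  exact map_subtype_le_piCore inferInstance (hA.subgroupOf _)

end Normalized

theorem le_piCore_of_le_normalizer {π : Set ℕ} {X : Type*} [Group X] [Finite X]
    {A N : Subgroup X} [N.Normal] (hN : IsPiNumber π N.index)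
    (hNA : N ≤ normalizer (A : Set X)) (hA : IsPiGroup π A) : A ≤ piCore π X := by
  have := piCore_normal (π := π) (G := X)
  have hf := QuotientGroup.mk'_surjective (piCore π X)
  have : (N.map (QuotientGroup.mk' (piCore π X))).Normal := Normal.map ‹_› _ hf
  have h := eq_bot_of_le_normalizer_of_piCore_eq_bot piCore_quotient_piCore
    (hN.of_dvd (index_map_dvd N hf)) ((map_mono hNA).trans (le_normalizer_map _)) (hA.map _)
  rwa [Subgroup.map_eq_bot_iff, QuotientGroup.ker_mk'] at h

theorem isPiGroup_map_mk'_piResidualIn {π : Set ℕ} {G : Type*} [Group G] [Finite G]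
    (H : Subgroup G) [(piResidualIn π H).Normal] :
    IsPiGroup π (H.map (QuotientGroup.mk' (piResidualIn π H))) := by
  have hR : (piResidualIn π H).subgroupOf H = piResidual π H :=
    comap_map_eq_self_of_injective H.subtype_injective _
  rw [isPiGroup_iff, ← relIndex_ker, QuotientGroup.ker_mk', relIndex, hR]
  exact isPiNumber_index_piResidual

theorem dnormal_image_le_piCore_general (π : Set ℕ)
    (G : Type*) [Group G] [Finite G] (H : Subgroup G)
    (h : IsDnormal π H) :
    ∃ hn : (piResidualIn π H).Normal,
      letI := hn
      H.map (QuotientGroup.mk' (piResidualIn π H)) ≤ piCore π (G ⧸ piResidualIn π H) := by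
  rcases h with ⟨-, hH⟩ | ⟨-, hn, hres⟩
  · have := hH
    exact ⟨inferInstance, le_piCore (hH.map _ (QuotientGroup.mk'_surjective _))
      (isPiGroup_map_mk'_piResidualIn H)⟩
  · have hf := QuotientGroup.mk'_surjective (piResidualIn π H)
    have : ((piResidual π G).map (QuotientGroup.mk' (piResidualIn π H))).Normal :=
      piResidual_normal.map _ hf
    exact ⟨hn, le_piCore_of_le_normalizer
      (isPiNumber_index_piResidual.of_dvd (index_map_dvd _ hf))
      ((map_mono hres).trans (le_normalizer_map _)) (isPiGroup_map_mk'_piResidualIn H)⟩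

/-- Lemma 1.5(1): if `H` is `N^π`-Dnormal in `G`, then `O^π(H) ⊴ G` and
`H/O^π(H) ≤ O_π(G/O^π(H))`. -/
theorem dnormal_image_le_piCore (π : Set ℕ) (hπ : ∀ p ∈ π, p.Prime)
    (G : Type*) [Group G] [Finite G] (H : Subgroup G)
    (h : IsDnormal π H) :
    ∃ hn : (piResidualIn π H).Normal,
      letI := hn
      H.map (QuotientGroup.mk' (piResidualIn π H)) ≤ piCore π (G ⧸ piResidualIn π H) :=
  dnormal_image_le_piCore_general π G H h
end

section
/- Let π be a set of primes, G a finite group, and F an N^π-Fitting set of G. If H is an N^π-Dnormal subgroup of G, then the F-radical H_F (the join of all normal subgroups of H belonging to F) is N^π-Dnormal in G. -/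
/-!
Conjugation carries the `F`-radical of `K` onto that of `K ^ g`, so whatever normalizes `K`
normalizes `K_F`; this settles the case `|π| ≤ 1` and shows that `O^π(G)` normalizes `H_F`.
For the normality of `O^π(H_F)`, let `D = O^π(H)` (normal in `G`) and `E = D_F` (then also
normal in `G`). Since `H_F ∩ D` is normal both in `H_F ∈ F` and in `D`, it lies in `E`, whence
`O^π(H_F) ≤ H_F ∩ D ≤ E ≤ H_F`. As `O^π` is idempotent, `O^π(H_F) = O^π(E)`, which is
normal in `G`.
-/

namespace Subgroup

variable {G : Type*} [Group G]

lemma normalizer_le_normalizer_of_map_conj_le {Φ : Subgroup G → Subgroup G}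
    (hΦ : ∀ (g : G) (K : Subgroup G),
      (Φ K).map (MulAut.conj g).toMonoidHom ≤ Φ (K.map (MulAut.conj g).toMonoidHom))
    (K : Subgroup G) : normalizer (K : Set G) ≤ normalizer (Φ K : Set G) := by
  have hK : ∀ g ∈ normalizer (K : Set G), (Φ K).map (MulAut.conj g).toMonoidHom ≤ Φ K :=
    fun g hg => (hΦ g K).trans_eq (congrArg Φ (mem_normalizer_iff_map_conj_eq.mp hg))
  intro g hg
  rw [mem_normalizer_iff_map_conj_eq]
  refine (hK g hg).antisymm fun x hx => ?_
  exact ⟨_, map_le_iff_le_comap.mp (hK g⁻¹ (inv_mem hg)) hx, by simp [mul_assoc]⟩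

lemma Normal.of_normalizer_le {A B : Subgroup G} (hA : A.Normal)
    (h : normalizer (A : Set G) ≤ normalizer (B : Set G)) : B.Normal :=
  normalizer_eq_top_iff.mp (eq_top_iff.mpr ((normalizer_eq_top_iff.mpr hA).ge.trans h))

end Subgroup

open Subgroup

section PiResidual

variable (π : Set ℕ) {X Y : Type*} [Group X] [Group Y]

lemma piResidual_le {N : Subgroup X} (hN : N.Normal)
    (hidx : ∀ p : ℕ, p.Prime → p ∣ N.index → p ∈ π) : piResidual π X ≤ N :=
  iInf₂_le N ⟨hN, hidx⟩

lemma map_piResidual_le (f : X →* Y) : (piResidual π X).map f ≤ piResidual π Y := by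
  refine le_iInf₂ fun N ⟨hN, hidx⟩ => map_le_iff_le_comap.mpr (piResidual_le π (hN.comap f) ?_)
  intro p hp hd
  rw [index_comap] at hd
  exact hidx p hp (hd.trans (relIndex_dvd_index_of_normal N _))

lemma prime_mem_of_dvd_index_piResidual [Finite X] {p : ℕ} (hp : p.Prime)
    (hd : p ∣ (piResidual π X).index) : p ∈ π := by
  have : Finite (Subgroup X) := Finite.of_injective _ SetLike.coe_injective
  let s := {N : Subgroup X | N.Normal ∧ ∀ p : ℕ, p.Prime → p ∣ N.index → p ∈ π}
  have hs : InfClosed s := by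
    rintro N₁ ⟨hN₁, hidx₁⟩ N₂ ⟨hN₂, hidx₂⟩
    refine ⟨normal_inf_normal N₁ N₂, fun p hp hd => ?_⟩
    rw [← relIndex_mul_index (inf_le_right : N₁ ⊓ N₂ ≤ N₂), inf_relIndex_right] at hd
    rcases hp.dvd_mul.mp hd with h | h
    · exact hidx₁ p hp (h.trans (relIndex_dvd_index_of_normal N₁ N₂))
    · exact hidx₂ p hp h
  have htop : (⊤ : Subgroup X) ∈ s := ⟨inferInstance, fun p hp hd =>
    absurd (Nat.dvd_one.mp (index_top (G := X) ▸ hd)) hp.ne_one⟩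
  exact (hs.biInf_mem (Set.toFinite s) htop fun _ hN => hN).2 p hp hd

end PiResidual

section PiResidualIn

variable (π : Set ℕ) {G G' : Type*} [Group G] [Group G']

lemma piResidualIn_le (K : Subgroup G) : piResidualIn π K ≤ K :=
  map_subtype_le _

lemma map_piResidualIn_le (f : G →* G') (K : Subgroup G) :
    (piResidualIn π K).map f ≤ piResidualIn π (K.map f) := by
  have hf : f.comp K.subtype = (K.map f).subtype.comp (f.subgroupMap K) := rfl
  rw [piResidualIn, piResidualIn, map_map, hf, ← map_map]
  exact map_mono (map_piResidual_le π _)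

lemma piResidualIn_mono {K L : Subgroup G} (h : K ≤ L) :
    piResidualIn π K ≤ piResidualIn π L := by
  rw [piResidualIn, piResidualIn, ← subtype_comp_inclusion h, ← map_map]
  exact map_mono (map_piResidual_le π (inclusion h))

lemma piResidualIn_le_of {M K : Subgroup G} (hMK : M ≤ K)
    (hKM : K ≤ normalizer (M : Set G)) (hidx : ∀ p : ℕ, p.Prime → p ∣ M.relIndex K → p ∈ π) :
    piResidualIn π K ≤ M :=
  map_le_iff_le_comap.mpr
    (piResidual_le π ((normal_subgroupOf_iff_le_normalizer hMK).mpr hKM) hidx)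

lemma prime_mem_of_dvd_relIndex_piResidualIn [Finite G] (K : Subgroup G) {p : ℕ}
    (hp : p.Prime) (hd : p ∣ (piResidualIn π K).relIndex K) : p ∈ π := by
  rw [relIndex, piResidualIn, subgroupOf, comap_map_eq_self_of_injective K.subtype_injective]
    at hd
  exact prime_mem_of_dvd_index_piResidual π hp hd

lemma normalizer_le_normalizer_piResidualIn (K : Subgroup G) :
    normalizer (K : Set G) ≤ normalizer (piResidualIn π K : Set G) :=
  normalizer_le_normalizer_of_map_conj_le (fun _ K => map_piResidualIn_le π _ K) K

lemma piResidualIn_piResidualIn [Finite G] (K : Subgroup G) :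
    piResidualIn π (piResidualIn π K) = piResidualIn π K := by
  refine (piResidualIn_mono π (piResidualIn_le π K)).antisymm (piResidualIn_le_of π ?_ ?_ ?_)
  · exact (piResidualIn_le π _).trans (piResidualIn_le π K)
  · exact le_normalizer.trans ((normalizer_le_normalizer_piResidualIn π K).trans
      (normalizer_le_normalizer_piResidualIn π _))
  · intro p hp hd
    rw [← relIndex_mul_relIndex _ _ _ (piResidualIn_le π _) (piResidualIn_le π K)] at hd
    rcases hp.dvd_mul.mp hd with h | h
    · exact prime_mem_of_dvd_relIndex_piResidualIn π _ hp h
    · exact prime_mem_of_dvd_relIndex_piResidualIn π K hp h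

lemma piResidualIn_eq_of_le_of_le [Finite G] {M K : Subgroup G} (hKM : piResidualIn π K ≤ M)
    (hMK : M ≤ K) : piResidualIn π M = piResidualIn π K :=
  (piResidualIn_mono π hMK).antisymm
    ((piResidualIn_piResidualIn π K).ge.trans (piResidualIn_mono π hKM))

end PiResidualIn

section Dnormal

variable (π : Set ℕ) {G : Type*} [Group G] {Z : Subgroup G}

lemma Subgroup.Normal.isDnormal (hZ : Z.Normal) : IsDnormal π Z := by
  by_cases hπ : π.Subsingleton
  · exact Or.inl ⟨hπ, hZ⟩
  · exact Or.inr ⟨hπ, hZ.of_normalizer_le (normalizer_le_normalizer_piResidualIn π Z),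
      le_normalizer_of_normal⟩

lemma Subgroup.Normal.isDsubnormal (hZ : Z.Normal) : IsDsubnormal π Z := by
  refine ⟨1, ![Z, ⊤], rfl, rfl, fun i => ?_⟩
  obtain rfl : i = 0 := Subsingleton.elim i 0
  exact ⟨le_top, (hZ.comap _).isDnormal π⟩

end Dnormal

namespace IsNPiFittingSet

variable {π : Set ℕ} {G : Type*} [Group G] {F : Set (Subgroup G)}

lemma mem_of_le_normalizer (hF : IsNPiFittingSet π F) {S T : Subgroup G} (hS : S ∈ F)
    (hTS : T ≤ S) (hST : S ≤ normalizer (T : Set G)) : T ∈ F :=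
  hF.2.1 S hS T hTS (((normal_subgroupOf_iff_le_normalizer hTS).mpr hST).isDsubnormal π)

lemma bot_mem (hF : IsNPiFittingSet π F) : ⊥ ∈ F :=
  hF.1.elim fun _ hS => hF.mem_of_le_normalizer hS bot_le le_normalizer_of_normal

lemma sup_mem_of_le_normalizer (hF : IsNPiFittingSet π F) {S T : Subgroup G} (hS : S ∈ F)
    (hT : T ∈ F) (hSN : S ⊔ T ≤ normalizer (S : Set G)) (hTN : S ⊔ T ≤ normalizer (T : Set G)) :
    S ⊔ T ∈ F :=
  hF.2.2.1 S hS T hT ((normal_subgroupOf_iff_le_normalizer le_sup_left).mpr hSN |>.isDnormal π)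
    ((normal_subgroupOf_iff_le_normalizer le_sup_right).mpr hTN |>.isDnormal π)

end IsNPiFittingSet

section FittingRadical

variable {π : Set ℕ} {G : Type*} [Group G] {F : Set (Subgroup G)}

lemma fittingRadical_le (K : Subgroup G) : fittingRadical F K ≤ K :=
  iSup₂_le fun _ hS => hS.2.1

lemma le_fittingRadical {S K : Subgroup G} (hSF : S ∈ F) (hSK : S ≤ K)
    (hKS : K ≤ normalizer (S : Set G)) : S ≤ fittingRadical F K :=
  le_iSup₂_of_le S ⟨hSF, hSK, (normal_subgroupOf_iff_le_normalizer hSK).mpr hKS⟩ le_rfl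

lemma map_conj_fittingRadical_le (hF : IsNPiFittingSet π F) (g : G) (K : Subgroup G) :
    (fittingRadical F K).map (MulAut.conj g).toMonoidHom
      ≤ fittingRadical F (K.map (MulAut.conj g).toMonoidHom) := by
  refine ((gc_map_comap _).l_iSup₂).trans_le (iSup₂_le fun S ⟨hSF, hSK, hSn⟩ => ?_)
  exact le_fittingRadical (hF.2.2.2 S hSF g) (map_mono hSK)
    ((map_mono ((normal_subgroupOf_iff_le_normalizer hSK).mp hSn)).trans (le_normalizer_map _))

lemma normalizer_le_normalizer_fittingRadical (hF : IsNPiFittingSet π F) (K : Subgroup G) :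
    normalizer (K : Set G) ≤ normalizer (fittingRadical F K : Set G) :=
  normalizer_le_normalizer_of_map_conj_le (map_conj_fittingRadical_le hF) K

lemma le_normalizer_fittingRadical (hF : IsNPiFittingSet π F) (K : Subgroup G) :
    K ≤ normalizer (fittingRadical F K : Set G) :=
  le_normalizer.trans (normalizer_le_normalizer_fittingRadical hF K)

lemma fittingRadical_mem [Finite G] (hF : IsNPiFittingSet π F) (K : Subgroup G) :
    fittingRadical F K ∈ F := by
  have : Finite (Subgroup G) := Finite.of_injective _ SetLike.coe_injective
  let s := {S : Subgroup G | S ∈ F ∧ S ≤ K ∧ K ≤ normalizer (S : Set G)}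
  have hs : SupClosed s := by
    rintro S ⟨hSF, hSK, hKS⟩ T ⟨hTF, hTK, hKT⟩
    have hKST : K ≤ normalizer ((S ⊔ T : Subgroup G) : Set G) :=
      (le_inf hKS hKT).trans (normalizer_inf_normalizer_le_normalizer_sup S T)
    have hST : S ⊔ T ≤ K := sup_le hSK hTK
    exact ⟨hF.sup_mem_of_le_normalizer hSF hTF (hST.trans hKS) (hST.trans hKT), hST, hKST⟩
  have hbot : ⊥ ∈ s := ⟨hF.bot_mem, bot_le, le_normalizer_of_normal⟩
  exact (hs.biSup_mem (f := id) (t := {S | S ∈ F ∧ S ≤ K ∧ (S.subgroupOf K).Normal})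
    (Set.toFinite _) hbot fun S ⟨hSF, hSK, hSn⟩ =>
    ⟨hSF, hSK, (normal_subgroupOf_iff_le_normalizer hSK).mp hSn⟩).1

end FittingRadical

lemma piResidualIn_fittingRadical_eq {π : Set ℕ} {G : Type*} [Group G] [Finite G]
    {F : Set (Subgroup G)} (hF : IsNPiFittingSet π F) {H : Subgroup G}
    (hD : (piResidualIn π H).Normal) :
    piResidualIn π (fittingRadical F H) = piResidualIn π (fittingRadical F (piResidualIn π H)) := by
  set D := piResidualIn π H
  set R := fittingRadical F H
  set E := fittingRadical F D
  have hDR : D ≤ normalizer (R : Set G) :=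
    (piResidualIn_le π H).trans (le_normalizer_fittingRadical hF H)
  have hE : E.Normal := hD.of_normalizer_le (normalizer_le_normalizer_fittingRadical hF D)
  have hER : E ≤ R := le_fittingRadical (fittingRadical_mem hF D)
    ((fittingRadical_le D).trans (piResidualIn_le π H)) le_normalizer_of_normal
  have hRD : R ⊓ D ∈ F := hF.mem_of_le_normalizer (fittingRadical_mem hF H) inf_le_left
    ((le_inf le_normalizer le_normalizer_of_normal).trans inf_normalizer_le_normalizer_inf)
  have hRDE : R ⊓ D ≤ E := le_fittingRadical hRD inf_le_right
    ((le_inf hDR le_normalizer).trans inf_normalizer_le_normalizer_inf)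
  have hRE : piResidualIn π R ≤ E :=
    (le_inf (piResidualIn_le π R) (piResidualIn_mono π (fittingRadical_le H))).trans hRDE
  exact (piResidualIn_eq_of_le_of_le π hRE hER).symm

theorem dnormal_fittingRadical_general (π : Set ℕ)
    (G : Type*) [Group G] [Finite G] (F : Set (Subgroup G))
    (hF : IsNPiFittingSet π F) (H : Subgroup G) (h : IsDnormal π H) :
    IsDnormal π (fittingRadical F H) := by
  rcases h with ⟨hπ, hH⟩ | ⟨hπ, hD, hGH⟩
  · exact Or.inl ⟨hπ, hH.of_normalizer_le (normalizer_le_normalizer_fittingRadical hF H)⟩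
  · refine Or.inr ⟨hπ, ?_, hGH.trans (normalizer_le_normalizer_fittingRadical hF H)⟩
    rw [piResidualIn_fittingRadical_eq hF hD]
    exact (hD.of_normalizer_le (normalizer_le_normalizer_fittingRadical hF _)).of_normalizer_le
      (normalizer_le_normalizer_piResidualIn π _)

/-- Lemma 2.4: if `F` is an `N^π`-Fitting set of `G` and `H` is `N^π`-Dnormal in `G`,
then the `F`-radical `H_F` is `N^π`-Dnormal in `G`. -/
theorem dnormal_fittingRadical (π : Set ℕ) (hπ : ∀ p ∈ π, p.Prime)
    (G : Type*) [Group G] [Finite G] (F : Set (Subgroup G))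
    (hF : IsNPiFittingSet π F) (H : Subgroup G) (h : IsDnormal π H) :
    IsDnormal π (fittingRadical F H) :=
  dnormal_fittingRadical_general π G F hF H h
end
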